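/- arXiv:1701.08925 — 2 statements merged into one kernel-verified Lean document; each statement's English description precedes it below -/
import Mathlib

section
/- Suppose sprank(A^S) = n, A ∈ A^S satisfies the matching property (rank(A_T) = sprank(A^S_T) for every T ⊆ {1,…,m}), and C ∈ A^S is any matrix with the same sparsity pattern. Then cospark(C) ≤ cospark(A). -/
open Matrix MeasureTheory

/-- `A` has sparsity pattern `S`: the nonzero entries of `A` are exactly those indexed by `S`. -/
def HasPattern {m n : ℕ} (S : Finset (Fin m × Fin n)) (A : Matrix (Fin m) (Fin n) ℝ) : Prop :=
  ∀ i j, A i j ≠ 0 ↔ (i, j) ∈ S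

/-- Generic rank of the class of matrices with sparsity pattern `S`. -/
noncomputable def sprank {m n : ℕ} (S : Finset (Fin m × Fin n)) : ℕ :=
  sSup {r : ℕ | ∃ A : Matrix (Fin m) (Fin n) ℝ, HasPattern S A ∧ A.rank = r}

/-- The sparsity pattern restricted to the rows in `T` (rows outside `T` become zero). -/
def patternOn {m n : ℕ} (S : Finset (Fin m × Fin n)) (T : Finset (Fin m)) :
    Finset (Fin m × Fin n) :=
  S.filter (fun p => p.1 ∈ T)

/-- A matching of a sparsity pattern: any two distinct pairs differ in both coordinates. -/
def IsMatching {m n : ℕ} (M : Finset (Fin m × Fin n)) : Prop :=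
  ∀ p ∈ M, ∀ q ∈ M, p ≠ q → p.1 ≠ q.1 ∧ p.2 ≠ q.2

/-- `nu S` : maximum cardinality of a matching contained in `S`. -/
noncomputable def nu {m n : ℕ} (S : Finset (Fin m × Fin n)) : ℕ :=
  sSup {k : ℕ | ∃ M ⊆ S, IsMatching M ∧ M.card = k}

/-- ℓ₀ "norm": number of nonzero entries of a vector. -/
noncomputable def l0 {m : ℕ} (y : Fin m → ℝ) : ℕ :=
  (Finset.univ.filter (fun i => y i ≠ 0)).card

/-- `cospark A` : minimum of `‖A x‖₀` over nonzero `x`. -/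
noncomputable def cospark {m n : ℕ} (A : Matrix (Fin m) (Fin n) ℝ) : ℕ :=
  sInf {k : ℕ | ∃ x : Fin n → ℝ, x ≠ 0 ∧ l0 (A.mulVec x) = k}

/-- Generic cospark of the class of matrices with sparsity pattern `S`. -/
noncomputable def spcospark {m n : ℕ} (S : Finset (Fin m × Fin n)) : ℕ :=
  sSup {k : ℕ | ∃ A : Matrix (Fin m) (Fin n) ℝ, HasPattern S A ∧ cospark A = k}

/-- The row-submatrix `A_T`, realized as `A` with the rows outside `T` zeroed out. -/
noncomputable def rowRestrict {m n : ℕ} (A : Matrix (Fin m) (Fin n) ℝ) (T : Finset (Fin m)) :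
    Matrix (Fin m) (Fin n) ℝ :=
  Matrix.of fun i j => if i ∈ T then A i j else 0

/-- `X_W` : the rows of the pattern `S` all of whose nonzero positions lie in the columns `W`. -/
def rowsIn {m n : ℕ} (S : Finset (Fin m × Fin n)) (W : Finset (Fin n)) : Finset (Fin m) :=
  Finset.univ.filter (fun i => ∀ j, (i, j) ∈ S → j ∈ W)

/-!
Take `x ≠ 0` attaining `cospark A` and let `T` be the rows where `A x` vanishes. Since `A_T x = 0`,
`rank A_T < n`. The matching property gives `rank C_T ≤ sprank S_T = rank A_T < n`, so some
`x' ≠ 0` has `C_T x' = 0`; then `C x'` vanishes wherever `A x` does, and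
`cospark C ≤ ‖C x'‖₀ ≤ ‖A x‖₀ = cospark A`.
-/

theorem Matrix.exists_mulVec_eq_zero_iff_rank_lt {K m n : Type*} [Field K] [Fintype n]
    (M : Matrix m n K) : (∃ x ≠ 0, M *ᵥ x = 0) ↔ M.rank < Fintype.card n := by
  have hdim := LinearMap.finrank_range_add_finrank_ker M.mulVecLin
  rw [Module.finrank_fintype_fun_eq_card] at hdim
  have hker : (∃ x ≠ 0, M *ᵥ x = 0) ↔ Module.finrank K (LinearMap.ker M.mulVecLin) ≠ 0 := by
    rw [Ne, Submodule.finrank_eq_zero, ker_mulVecLin_eq_bot_iff]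
    push Not
    exact exists_congr fun x => and_comm
  rw [hker, rank]
  omega

theorem l0_le_l0_of_support_subset {m : ℕ} {y z : Fin m → ℝ}
    (h : Function.support y ⊆ Function.support z) :
    l0 y ≤ l0 z :=
  Finset.card_le_card fun i hi => by simp_all

theorem cospark_le_cospark_of_forall_exists {m m' n : ℕ} {A : Matrix (Fin m) (Fin n) ℝ}
    {C : Matrix (Fin m') (Fin n) ℝ} (h : ∀ x ≠ 0, ∃ x' ≠ 0, l0 (C *ᵥ x') ≤ l0 (A *ᵥ x)) :
    cospark C ≤ cospark A := by
  rcases Set.eq_empty_or_nonempty {k | ∃ x : Fin n → ℝ, x ≠ 0 ∧ l0 (A *ᵥ x) = k} with hA | hA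
  · -- only when `n = 0`: both sets are empty and both `sInf`s are `0`
    have hC : {k | ∃ x : Fin n → ℝ, x ≠ 0 ∧ l0 (C *ᵥ x) = k} = ∅ :=
      Set.eq_empty_of_forall_notMem fun _ ⟨x, hx, _⟩ => hA.subset ⟨x, hx, rfl⟩
    rw [cospark, cospark, hA, hC]
  · obtain ⟨x, hx, hxA⟩ := Nat.sInf_mem hA
    obtain ⟨x', hx', hle⟩ := h x hx
    calc cospark C ≤ l0 (C *ᵥ x') := Nat.sInf_le ⟨x', hx', rfl⟩
      _ ≤ cospark A := hle.trans_eq hxA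

theorem HasPattern.rank_le_sprank {m n : ℕ} {S : Finset (Fin m × Fin n)}
    {B : Matrix (Fin m) (Fin n) ℝ} (hB : HasPattern S B) : B.rank ≤ sprank S := by
  have hbdd : BddAbove {r | ∃ B' : Matrix (Fin m) (Fin n) ℝ, HasPattern S B' ∧ B'.rank = r} := by
    refine ⟨n, ?_⟩
    rintro _ ⟨B', -, rfl⟩
    exact B'.rank_le_width
  exact le_csSup hbdd ⟨B, hB, rfl⟩

theorem HasPattern.rowRestrict {m n : ℕ} {S : Finset (Fin m × Fin n)}
    {B : Matrix (Fin m) (Fin n) ℝ} (hB : HasPattern S B) (T : Finset (Fin m)) :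
    HasPattern (patternOn S T) (_root_.rowRestrict B T) := by
  intro i j
  by_cases hi : i ∈ T <;> simp [_root_.rowRestrict, patternOn, hi, hB i j]

theorem rowRestrict_mulVec_apply {m n : ℕ} (B : Matrix (Fin m) (Fin n) ℝ) (T : Finset (Fin m))
    (x : Fin n → ℝ) (i : Fin m) :
    (rowRestrict B T *ᵥ x) i = if i ∈ T then (B *ᵥ x) i else 0 := by
  by_cases hi : i ∈ T <;> simp [rowRestrict, mulVec, dotProduct, hi]

theorem rowRestrict_mulVec_eq_zero_iff {m n : ℕ} (B : Matrix (Fin m) (Fin n) ℝ)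
    (T : Finset (Fin m)) (x : Fin n → ℝ) :
    rowRestrict B T *ᵥ x = 0 ↔ ∀ i ∈ T, (B *ᵥ x) i = 0 := by
  simp only [funext_iff, rowRestrict_mulVec_apply, Pi.zero_apply, ite_eq_right_iff]

theorem exists_support_mulVec_subset_of_rank_rowRestrict_eq_sprank {m n : ℕ}
    {S : Finset (Fin m × Fin n)} {A C : Matrix (Fin m) (Fin n) ℝ}
    (hmatch : ∀ T : Finset (Fin m), (rowRestrict A T).rank = sprank (patternOn S T))
    (hC : HasPattern S C) {x : Fin n → ℝ} (hx : x ≠ 0) :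
    ∃ x' ≠ 0, Function.support (C *ᵥ x') ⊆ Function.support (A *ᵥ x) := by
  set T := Finset.univ.filter fun i => (A *ᵥ x) i = 0
  have hAT : (rowRestrict A T).rank < n := by
    simpa using (rowRestrict A T).exists_mulVec_eq_zero_iff_rank_lt.mp
      ⟨x, hx, (rowRestrict_mulVec_eq_zero_iff A T x).mpr fun i hi => (Finset.mem_filter.mp hi).2⟩
  have hCT : (rowRestrict C T).rank < n :=
    ((hC.rowRestrict T).rank_le_sprank.trans_eq (hmatch T).symm).trans_lt hAT
  obtain ⟨x', hx', hCx'⟩ :=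
    (rowRestrict C T).exists_mulVec_eq_zero_iff_rank_lt.mpr (by simpa using hCT)
  refine ⟨x', hx', fun i hCi hAi => hCi ?_⟩
  exact (rowRestrict_mulVec_eq_zero_iff C T x').mp hCx' i (by simp [T, hAi])

theorem stmt3_general {m n : ℕ} (S : Finset (Fin m × Fin n))
    (A : Matrix (Fin m) (Fin n) ℝ)
    (hmatch : ∀ T : Finset (Fin m), (rowRestrict A T).rank = sprank (patternOn S T))
    (C : Matrix (Fin m) (Fin n) ℝ) (hC : HasPattern S C) :
    cospark C ≤ cospark A := by
  refine cospark_le_cospark_of_forall_exists fun x hx => ?_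
  obtain ⟨x', hx', hsupp⟩ :=
    exists_support_mulVec_subset_of_rank_rowRestrict_eq_sprank hmatch hC hx
  exact ⟨x', hx', l0_le_l0_of_support_subset hsupp⟩

/-- if `sprank S = n`, `A ∈ A^S` satisfies the matching property, and `C ∈ A^S`
is any matrix with the same sparsity pattern, then `cospark C ≤ cospark A`. -/
theorem stmt3 {m n : ℕ} (hn : 1 ≤ n) (hmn : n < m) (S : Finset (Fin m × Fin n))
    (hspr : sprank S = n) (A : Matrix (Fin m) (Fin n) ℝ) (hA : HasPattern S A)
    (hmatch : ∀ T : Finset (Fin m), (rowRestrict A T).rank = sprank (patternOn S T))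
    (C : Matrix (Fin m) (Fin n) ℝ) (hC : HasPattern S C) :
    cospark C ≤ cospark A :=
  stmt3_general S A hmatch C hC
end

section
/- In the OPT setup, consider the sparsity pattern S_{X_{W*}} with the matching M_p, and let P be an augmenting path with respect to M_p from an M_p-unmatched row c ∈ X_{W*} \ (I ∪ J) to an M_p-unmatched column u (a sequence c = i_0, c_1, i_1, …, i_{k−1}, c_k = u of distinct rows in X_{W*} and distinct columns with (i_{t−1}, c_t) ∈ S for 1 ≤ t ≤ k and (i_t, c_t) ∈ M_p for 1 ≤ t ≤ k−1). Then for every j ∈ J, no alternating path with respect to M_p starting from j (a sequence j = i'_0, c'_1, i'_1, c'_2, … of distinct rows in X_{W*} and distinct columns with (i'_{t−1}, c'_t) ∈ S \ M_p and (i'_t, c'_t) ∈ M_p for each applicable t) passes through any row or column vertex of P. -/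
open Matrix MeasureTheory

/-!
Follow the alternating path `Q` from `j` until it first meets `P`. It cannot first meet `P` in a
row: the rows of `P` are `c₀`, which is `M_p`-unmatched and differs from `j`, and rows that are
`M_p`-matched to columns of `P`, so `Q` would have met `P` one column earlier. If it first meets
`P` in a column, then `Q` up to that column followed by the rest of `P` is an `M_p`-alternating
path from `j` to an `M_p`-unmatched column `u ∈ W*`. The `M`-partner of `u` lies outside
`X_{W*}`, so it has an entry in a column outside `W*`, which `M` does not match. Appending that
entry gives an `M`-augmenting path from `j ∈ OPT \ I`, and augmenting `M` along it yields a
matching of `S_OPT` with `n` edges, contradicting `ν(S_OPT) = n - 1`.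
-/

open Finset Function

namespace IsMatching

variable {m n : ℕ} {M M' : Finset (Fin m × Fin n)}

theorem subset (hM : IsMatching M) (h : M' ⊆ M) : IsMatching M' :=
  fun p hp q hq hne => hM p (h hp) q (h hq) hne

theorem eq_of_fst_eq (hM : IsMatching M) {p q : Fin m × Fin n} (hp : p ∈ M) (hq : q ∈ M)
    (h : p.1 = q.1) : p = q := by
  by_contra hne
  exact (hM p hp q hq hne).1 h

theorem eq_of_snd_eq (hM : IsMatching M) {p q : Fin m × Fin n} (hp : p ∈ M) (hq : q ∈ M)
    (h : p.2 = q.2) : p = q := by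
  by_contra hne
  exact (hM p hp q hq hne).2 h

theorem union (hM : IsMatching M) (hM' : IsMatching M')
    (h : ∀ p ∈ M, ∀ q ∈ M', p.1 ≠ q.1 ∧ p.2 ≠ q.2) : IsMatching (M ∪ M') := by
  intro p hp q hq hne
  rcases mem_union.1 hp with hp | hp <;> rcases mem_union.1 hq with hq | hq
  · exact hM p hp q hq hne
  · exact h p hp q hq
  · exact (h q hq p hp).imp Ne.symm Ne.symm
  · exact hM' p hp q hq hne

theorem card_le_nu {S : Finset (Fin m × Fin n)} (hM : IsMatching M) (hMS : M ⊆ S) :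
    M.card ≤ nu S :=
  le_csSup ⟨S.card, by rintro k ⟨N, hN, -, rfl⟩; exact card_le_card hN⟩ ⟨M, hMS, hM, rfl⟩

end IsMatching

section Seq

variable {α : Type*}

def seqAppend (k : ℕ) (f g : ℕ → α) : ℕ → α := fun t => if t < k then f t else g (t - k)

theorem seqAppend_of_lt {k t : ℕ} (f g : ℕ → α) (h : t < k) : seqAppend k f g t = f t :=
  if_pos h

theorem seqAppend_of_le {k t : ℕ} (f g : ℕ → α) (h : k ≤ t) : seqAppend k f g t = g (t - k) :=
  if_neg (Nat.not_lt.2 h)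

theorem injOn_seqAppend {k l : ℕ} {f g : ℕ → α} (hf : Set.InjOn f (Set.Iio k))
    (hg : Set.InjOn g (Set.Iio l)) (hfg : ∀ t < k, ∀ u < l, f t ≠ g u) :
    Set.InjOn (seqAppend k f g) (Set.Iio (k + l)) := by
  intro t (ht : t < k + l) u (hu : u < k + l) h
  unfold seqAppend at h
  split_ifs at h with htk huk huk
  · exact hf htk huk h
  · exact absurd h (hfg t htk (u - k) (by omega))
  · exact absurd h.symm (hfg u huk (t - k) (by omega))
  · have := hg (show t - k < l by omega) (show u - k < l by omega) h
    omega

theorem exists_comp_val_eq {k : ℕ} (f : Fin k → α) (d : α) :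
    ∃ g : ℕ → α, ∀ t : Fin k, g t = f t :=
  ⟨extend Fin.val f fun _ => d, Fin.val_injective.extend_apply f _⟩

end Seq

/-- The path `x 0, y 0, x 1, y 1, …, x (k - 1), y (k - 1)` of rows and columns. -/
structure IsAltPath {m n : ℕ} (S M : Finset (Fin m × Fin n)) (x : ℕ → Fin m) (y : ℕ → Fin n)
    (k : ℕ) : Prop where
  injOn_fst : Set.InjOn x (Set.Iio k)
  injOn_snd : Set.InjOn y (Set.Iio k)
  mem_pattern : ∀ t < k, (x t, y t) ∈ S
  mem_matching : ∀ t, t + 1 < k → (x (t + 1), y t) ∈ M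

theorem isAltPath_of_fin {m n a b : ℕ} {S M : Finset (Fin m × Fin n)} (hba : b ≤ a)
    {r : Fin a → Fin m} {c : Fin b → Fin n} {x : ℕ → Fin m} {y : ℕ → Fin n}
    (hx : ∀ t : Fin a, x t = r t) (hy : ∀ t : Fin b, y t = c t)
    (hr : Injective r) (hc : Injective c)
    (hS : ∀ t : Fin b, ∀ ht : t.val < a, (r ⟨t.val, ht⟩, c t) ∈ S)
    (hM : ∀ t : Fin b, ∀ ht : t.val + 1 < a, (r ⟨t.val + 1, ht⟩, c t) ∈ M) :
    IsAltPath S M x y b where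
  injOn_fst t (ht : t < b) u (hu : u < b) h := by
    rw [hx ⟨t, by omega⟩, hx ⟨u, by omega⟩] at h
    exact congrArg Fin.val (hr h)
  injOn_snd t ht u hu h := by
    rw [hy ⟨t, ht⟩, hy ⟨u, hu⟩] at h
    exact congrArg Fin.val (hc h)
  mem_pattern t ht := by
    rw [hx ⟨t, by omega⟩, hy ⟨t, ht⟩]
    exact hS ⟨t, ht⟩ _
  mem_matching t ht := by
    rw [hx ⟨t + 1, by omega⟩, hy ⟨t, by omega⟩]
    exact hM ⟨t, _⟩ _

def pathEdges {m n : ℕ} (x : ℕ → Fin m) (y : ℕ → Fin n) (k : ℕ) : Finset (Fin m × Fin n) :=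
  (range k).image fun t => (x t, y t)

def pathLinks {m n : ℕ} (x : ℕ → Fin m) (y : ℕ → Fin n) (k : ℕ) : Finset (Fin m × Fin n) :=
  (range (k - 1)).image fun t => (x (t + 1), y t)

/-- For an `M`-alternating path this is the symmetric difference of `M` with its edges. -/
def augment {m n : ℕ} (M : Finset (Fin m × Fin n)) (x : ℕ → Fin m) (y : ℕ → Fin n) (k : ℕ) :
    Finset (Fin m × Fin n) :=
  M \ pathLinks x y k ∪ pathEdges x y k

namespace IsAltPath

variable {m n : ℕ} {S M : Finset (Fin m × Fin n)} {x : ℕ → Fin m} {y : ℕ → Fin n} {k : ℕ}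

theorem mono {M' : Finset (Fin m × Fin n)} (hP : IsAltPath S M x y k) (h : M ⊆ M') :
    IsAltPath S M' x y k :=
  ⟨hP.injOn_fst, hP.injOn_snd, hP.mem_pattern, fun t ht => h (hP.mem_matching t ht)⟩

theorem take (hP : IsAltPath S M x y k) {l : ℕ} (hl : l ≤ k) : IsAltPath S M x y l :=
  ⟨hP.injOn_fst.mono (Set.Iio_subset_Iio hl), hP.injOn_snd.mono (Set.Iio_subset_Iio hl),
    fun t ht => hP.mem_pattern t (by omega), fun t ht => hP.mem_matching t (by omega)⟩

theorem drop (hP : IsAltPath S M x y k) (d : ℕ) :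
    IsAltPath S M (fun t => x (t + d)) (fun t => y (t + d)) (k - d) where
  injOn_fst t (ht : t < k - d) u (hu : u < k - d) h := by
    have := hP.injOn_fst (show t + d < k by omega) (show u + d < k by omega) h
    omega
  injOn_snd t (ht : t < k - d) u (hu : u < k - d) h := by
    have := hP.injOn_snd (show t + d < k by omega) (show u + d < k by omega) h
    omega
  mem_pattern t ht := hP.mem_pattern (t + d) (by omega)
  mem_matching t ht := by
    simpa only [Nat.add_right_comm] using hP.mem_matching (t + d) (by omega)

theorem single {r : Fin m} {c : Fin n} (h : (r, c) ∈ S) :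
    IsAltPath S M (fun _ => r) (fun _ => c) 1 where
  injOn_fst t (ht : t < 1) u (hu : u < 1) _ := by omega
  injOn_snd t (ht : t < 1) u (hu : u < 1) _ := by omega
  mem_pattern _ _ := h
  mem_matching t ht := by omega

theorem append {x' : ℕ → Fin m} {y' : ℕ → Fin n} {l : ℕ} (hP : IsAltPath S M x y k)
    (hP' : IsAltPath S M x' y' l) (hlink : 0 < l → (x' 0, y (k - 1)) ∈ M)
    (hx : ∀ t < k, ∀ u < l, x t ≠ x' u) (hy : ∀ t < k, ∀ u < l, y t ≠ y' u) :
    IsAltPath S M (seqAppend k x x') (seqAppend k y y') (k + l) where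
  injOn_fst := injOn_seqAppend hP.injOn_fst hP'.injOn_fst hx
  injOn_snd := injOn_seqAppend hP.injOn_snd hP'.injOn_snd hy
  mem_pattern t ht := by
    unfold seqAppend
    split_ifs with htk
    · exact hP.mem_pattern t htk
    · exact hP'.mem_pattern (t - k) (by omega)
  mem_matching t ht := by
    unfold seqAppend
    split_ifs with h₁ h₂ h₂
    · exact hP.mem_matching t h₁
    · omega
    · obtain rfl : t = k - 1 := by omega
      simpa [show k - 1 + 1 - k = 0 by omega] using hlink (by omega)
    · simpa [show t + 1 - k = t - k + 1 by omega] using hP'.mem_matching (t - k) (by omega)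

theorem patternOn_of_fst_mem {T : Finset (Fin m)} (hP : IsAltPath S M x y k)
    (hx : ∀ t < k, x t ∈ T) :
    IsAltPath (patternOn S T) M x y k :=
  ⟨hP.injOn_fst, hP.injOn_snd, fun t ht => mem_filter.2 ⟨hP.mem_pattern t ht, hx t ht⟩,
    hP.mem_matching⟩

theorem fst_mem {T : Finset (Fin m)} (hP : IsAltPath S M x y k) (hMT : ∀ p ∈ M, p.1 ∈ T)
    (h₀ : x 0 ∈ T) : ∀ t < k, x t ∈ T
  | 0, _ => h₀
  | t + 1, ht => hMT _ (hP.mem_matching t ht)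

theorem mem_pathLinks_of_fst_eq (hP : IsAltPath S M x y k) (hM : IsMatching M)
    (hx₀ : ∀ c, (x 0, c) ∉ M) {p : Fin m × Fin n} (hp : p ∈ M) {t : ℕ} (ht : t < k)
    (h : p.1 = x t) : p ∈ pathLinks x y k := by
  obtain _ | t := t
  · exact absurd (h ▸ hp) (hx₀ p.2)
  · rw [hM.eq_of_fst_eq hp (hP.mem_matching t ht) h]
    exact mem_image_of_mem _ (mem_range.2 (by omega))

theorem mem_pathLinks_of_snd_eq (hP : IsAltPath S M x y k) (hM : IsMatching M)
    (hyk : ∀ r, (r, y (k - 1)) ∉ M) {p : Fin m × Fin n} (hp : p ∈ M) {t : ℕ} (ht : t < k)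
    (h : p.2 = y t) : p ∈ pathLinks x y k := by
  by_cases htk : t + 1 < k
  · rw [hM.eq_of_snd_eq hp (hP.mem_matching t htk) h]
    exact mem_image_of_mem _ (mem_range.2 (by omega))
  · obtain rfl : t = k - 1 := by omega
    exact absurd (h ▸ hp) (hyk p.1)

theorem pathLinks_subset (hP : IsAltPath S M x y k) : pathLinks x y k ⊆ M := by
  simp only [pathLinks, image_subset_iff, mem_range]
  exact fun t ht => hP.mem_matching t (by omega)

theorem isMatching_pathEdges (hP : IsAltPath S M x y k) : IsMatching (pathEdges x y k) := by
  simp only [IsMatching, pathEdges, mem_image, mem_range]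
  rintro _ ⟨t, ht, rfl⟩ _ ⟨u, hu, rfl⟩ hne
  have htu : t ≠ u := by rintro rfl; exact hne rfl
  exact ⟨fun h => htu (hP.injOn_fst ht hu h), fun h => htu (hP.injOn_snd ht hu h)⟩

theorem augment_subset (hP : IsAltPath S M x y k) (hMS : M ⊆ S) : augment M x y k ⊆ S := by
  refine union_subset (sdiff_subset.trans hMS) ?_
  simp only [pathEdges, image_subset_iff, mem_range]
  exact hP.mem_pattern

theorem isMatching_augment (hP : IsAltPath S M x y k) (hM : IsMatching M)
    (hx₀ : ∀ c, (x 0, c) ∉ M) (hyk : ∀ r, (r, y (k - 1)) ∉ M) :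
    IsMatching (augment M x y k) := by
  refine (hM.subset sdiff_subset).union hP.isMatching_pathEdges ?_
  simp only [pathEdges, mem_image, mem_range, mem_sdiff]
  rintro p ⟨hp, hpL⟩ _ ⟨t, ht, rfl⟩
  exact ⟨fun h => hpL (hP.mem_pathLinks_of_fst_eq hM hx₀ hp ht h),
    fun h => hpL (hP.mem_pathLinks_of_snd_eq hM hyk hp ht h)⟩

theorem card_augment (hP : IsAltPath S M x y k) (hM : IsMatching M) (hk : 0 < k)
    (hx₀ : ∀ c, (x 0, c) ∉ M) : (augment M x y k).card = M.card + 1 := by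
  have hdisj : Disjoint (M \ pathLinks x y k) (pathEdges x y k) := by
    simp only [disjoint_right, pathEdges, mem_image, mem_range, mem_sdiff, not_and, not_not]
    rintro _ ⟨t, ht, rfl⟩ hp
    exact hP.mem_pathLinks_of_fst_eq hM hx₀ hp ht rfl
  have hlinks : (pathLinks x y k).card = k - 1 :=
    (card_image_of_injOn fun t ht u hu h =>
      hP.injOn_snd (show t < k by have := mem_range.1 ht; omega)
        (show u < k by have := mem_range.1 hu; omega) (congrArg Prod.snd h)).trans (card_range _)
  have hedges : (pathEdges x y k).card = k :=
    (card_image_of_injOn fun t ht u hu h =>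
      hP.injOn_fst (mem_range.1 ht) (mem_range.1 hu) (congrArg Prod.fst h)).trans (card_range _)
  have hle := card_le_card hP.pathLinks_subset
  rw [augment, card_union_of_disjoint hdisj, card_sdiff_of_subset hP.pathLinks_subset, hlinks,
    hedges]
  omega

theorem ne_fst_of_forall_ne_snd (hP : IsAltPath S M x y k) (hM : IsMatching M)
    (hx₀ : ∀ c, (x 0, c) ∉ M) {x' : ℕ → Fin m} {y' : ℕ → Fin n} {l : ℕ}
    (hx'₀ : x' 0 ≠ x 0) (hx'₀M : ∀ c, (x' 0, c) ∉ M)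
    (hM' : ∀ t, t + 1 < l → (x' (t + 1), y' t) ∈ M)
    (hy' : ∀ t, t + 1 < l → ∀ s < k, y' t ≠ y s) : ∀ t < l, ∀ s < k, x' t ≠ x s
  | 0, _, 0, _, h => hx'₀ h
  | 0, _, s + 1, hs, h => hx'₀M _ (h ▸ hP.mem_matching s hs)
  | t + 1, ht, 0, _, h => hx₀ _ (h ▸ hM' t ht)
  | t + 1, ht, s + 1, hs, h =>
    hy' t ht s (by omega) (congrArg Prod.snd (hM.eq_of_fst_eq (hM' t ht) (hP.mem_matching s hs) h))

end IsAltPath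

section OptSetup

variable {m n : ℕ} {S M Mp : Finset (Fin m × Fin n)} {OPT : Finset (Fin m)} {W : Finset (Fin n)}

theorem not_isAltPath_of_unmatched (hOPT : nu (patternOn S OPT) = n - 1)
    (hMsub : M ⊆ patternOn S OPT) (hM : IsMatching M) (hMcard : M.card = n - 1)
    (hW : W = M.image Prod.snd) (hMp : Mp = M.filter fun p => p.1 ∈ rowsIn S W)
    {x : ℕ → Fin m} {y : ℕ → Fin n} {k : ℕ} (hk : 0 < k)
    (hx₀ : x 0 ∈ OPT) (hx₀M : ∀ c, (x 0, c) ∉ M) (hx₀W : x 0 ∈ rowsIn S W)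
    (hyk : ∀ r, (r, y (k - 1)) ∉ Mp) : ¬ IsAltPath S Mp x y k := by
  subst hMp
  intro hP
  have hxW : ∀ t < k, x t ∈ rowsIn S W := hP.fst_mem (fun p hp => (mem_filter.1 hp).2) hx₀W
  have hyW : ∀ t < k, y t ∈ W := fun t ht => (mem_filter.1 (hxW t ht)).2 _ (hP.mem_pattern t ht)
  have hunmatched : ∀ w ∉ W, ∀ r, (r, w) ∉ M := fun w hw r h => hw (hW ▸ mem_image_of_mem _ h)
  obtain ⟨⟨r, c⟩, hrM, rfl : c = y (k - 1)⟩ := mem_image.1 (hW ▸ hyW (k - 1) (by omega))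
  have hrW : r ∉ rowsIn S W := fun h => hyk r (mem_filter.2 ⟨hrM, h⟩)
  obtain ⟨w, hrw, hw⟩ : ∃ w, (r, w) ∈ S ∧ w ∉ W := by simpa [rowsIn] using hrW
  have hP' := (hP.mono (filter_subset _ _)).append (IsAltPath.single (M := M) hrw)
    (fun _ => hrM) (fun t ht _ _ (h : x t = r) => hrW (h ▸ hxW t ht))
    (fun t ht _ _ (h : y t = w) => hw (h ▸ hyW t ht))
  have hP'₀ : seqAppend k x (fun _ => r) 0 = x 0 := seqAppend_of_lt _ _ hk
  have hP'last : seqAppend k y (fun _ => w) (k + 1 - 1) = w := seqAppend_of_le _ _ (by omega)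
  replace hP' := hP'.patternOn_of_fst_mem
    (hP'.fst_mem (fun p hp => (mem_filter.1 (hMsub hp)).2) (hP'₀ ▸ hx₀))
  have hN := (hP'.isMatching_augment hM (hP'₀ ▸ hx₀M)
    (by rw [hP'last]; exact hunmatched w hw)).card_le_nu (hP'.augment_subset hMsub)
  rw [hP'.card_augment hM (by omega) (hP'₀ ▸ hx₀M), hMcard, hOPT] at hN
  omega

theorem forall_snd_ne_snd_of_unmatched (hOPT : nu (patternOn S OPT) = n - 1)
    (hMsub : M ⊆ patternOn S OPT) (hM : IsMatching M) (hMcard : M.card = n - 1)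
    (hW : W = M.image Prod.snd) (hMp : Mp = M.filter fun p => p.1 ∈ rowsIn S W)
    {x x' : ℕ → Fin m} {y y' : ℕ → Fin n} {k l : ℕ}
    (hP : IsAltPath S Mp x y k) (hx₀ : ∀ c, (x 0, c) ∉ Mp) (hyk : ∀ r, (r, y (k - 1)) ∉ Mp)
    (hQ : IsAltPath S Mp x' y' l) (hx'₀ : x' 0 ≠ x 0) (hx'₀OPT : x' 0 ∈ OPT)
    (hx'₀M : ∀ c, (x' 0, c) ∉ M) (hx'₀W : x' 0 ∈ rowsIn S W) :
    ∀ i < l, ∀ s < k, y' i ≠ y s := by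
  have hMpM : Mp ⊆ M := hMp ▸ filter_subset _ _
  intro i
  induction i using Nat.strong_induction_on with
  | _ i ih =>
  intro hi s hs hys
  have hrows : ∀ t < i + 1, ∀ u < k, x' t ≠ x u :=
    hP.ne_fst_of_forall_ne_snd (hM.subset hMpM) hx₀ hx'₀ (fun c h => hx'₀M c (hMpM h))
      (fun t ht => hQ.mem_matching t (by omega)) (fun t ht => ih t (by omega) (by omega))
  have hcols : ∀ t < i + 1, ∀ u < k - (s + 1), y' t ≠ y (u + (s + 1)) := by
    intro t ht u hu
    rcases Nat.lt_or_ge t i with h | h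
    · exact ih t h (by omega) _ (by omega)
    · obtain rfl : t = i := by omega
      rw [hys]
      intro h
      have := hP.injOn_snd hs (show u + (s + 1) < k by omega) h
      omega
  have hlast : seqAppend (i + 1) y' (fun t => y (t + (s + 1))) (i + 1 + (k - (s + 1)) - 1)
      = y (k - 1) := by
    rcases Nat.lt_or_ge (s + 1) k with h | h
    · rw [seqAppend_of_le _ _ (by omega)]
      congr 1
      omega
    · rw [seqAppend_of_lt _ _ (by omega), show i + 1 + (k - (s + 1)) - 1 = i by omega, hys,
        show s = k - 1 by omega]
  have hfirst : seqAppend (i + 1) x' (fun t => x (t + (s + 1))) 0 = x' 0 :=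
    seqAppend_of_lt _ _ i.succ_pos
  -- `Q` up to `y' i = y s`, followed by `P` after `s`
  refine not_isAltPath_of_unmatched hOPT hMsub hM hMcard hW hMp (by omega)
    (hfirst ▸ hx'₀OPT) (hfirst ▸ hx'₀M) (hfirst ▸ hx'₀W) (hlast ▸ hyk)
    ((hQ.take hi).append (hP.drop (s + 1)) (fun _ => ?_) (fun t ht u hu => hrows t ht _ (by omega))
      hcols)
  simpa [hys] using hP.mem_matching s (by omega)

end OptSetup

/-- The augmenting path `P` has rows `rP t` and columns `cP t`; the alternating path from `j` has
rows `r' t = i'_t` and columns `c' t = c'_{t+1}`. -/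
theorem stmt11_general {m n : ℕ} (S : Finset (Fin m × Fin n))
    (OPT : Finset (Fin m)) (hOPT : nu (patternOn S OPT) = n - 1)
    (M : Finset (Fin m × Fin n)) (hMsub : M ⊆ patternOn S OPT)
    (hM : IsMatching M) (hMcard : M.card = n - 1)
    (I : Finset (Fin m)) (hI : I = M.image Prod.fst)
    (J : Finset (Fin m)) (hJ : J = OPT \ I)
    (W : Finset (Fin n)) (hW : W = M.image Prod.snd)
    (Mp : Finset (Fin m × Fin n)) (hMp : Mp = M.filter (fun p => p.1 ∈ rowsIn S W))
    (kP : ℕ) (hkP : 0 < kP) (rP : Fin kP → Fin m) (cP : Fin kP → Fin n)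
    (c0 : Fin m) (hc0J : c0 ∉ J)
    (hc0un : ∀ k : Fin n, (c0, k) ∉ Mp)
    (hrP0 : rP ⟨0, hkP⟩ = c0)
    (hrPinj : Function.Injective rP) (hcPinj : Function.Injective cP)
    (hPedge : ∀ t, (rP t, cP t) ∈ S)
    (hPmatch : ∀ t : Fin kP, ∀ ht : t.val + 1 < kP, (rP ⟨t.val + 1, ht⟩, cP t) ∈ Mp)
    (hPlast : ∀ i : Fin m, (i, cP ⟨kP - 1, Nat.sub_lt hkP Nat.one_pos⟩) ∉ Mp) :
    ∀ j ∈ J, ∀ (a b : ℕ) (ha : 0 < a) (r' : Fin a → Fin m) (c' : Fin b → Fin n),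
      (a = b ∨ a = b + 1) →
      r' ⟨0, ha⟩ = j →
      Function.Injective r' → Function.Injective c' →
      (∀ t, r' t ∈ rowsIn S W) →
      (∀ t : Fin b, ∀ ht : t.val < a, (r' ⟨t.val, ht⟩, c' t) ∈ S ∧ (r' ⟨t.val, ht⟩, c' t) ∉ Mp) →
      (∀ t : Fin b, ∀ ht : t.val + 1 < a, (r' ⟨t.val + 1, ht⟩, c' t) ∈ Mp) →
      (∀ t s, r' t ≠ rP s) ∧ (∀ t s, c' t ≠ cP s) := by
  intro j hj a b ha r' c' hab hr'0 hr'inj hc'inj hr'X hQS hQM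
  subst hI hJ
  obtain ⟨hjOPT, hjI⟩ := mem_sdiff.1 hj
  have hMpM : Mp ⊆ M := hMp ▸ filter_subset _ _
  obtain ⟨xP, hxP⟩ := exists_comp_val_eq rP c0
  obtain ⟨yP, hyP⟩ := exists_comp_val_eq cP (cP ⟨0, hkP⟩)
  obtain ⟨xQ, hxQ⟩ := exists_comp_val_eq r' c0
  obtain ⟨yQ, hyQ⟩ := exists_comp_val_eq c' (cP ⟨0, hkP⟩)
  have hP : IsAltPath S Mp xP yP kP :=
    isAltPath_of_fin le_rfl hxP hyP hrPinj hcPinj (fun t _ => hPedge t) hPmatch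
  have hQ : IsAltPath S Mp xQ yQ b :=
    isAltPath_of_fin (by omega) hxQ hyQ hr'inj hc'inj (fun t ht => (hQS t ht).1) hQM
  have hxP₀ : xP 0 = c0 := (hxP ⟨0, hkP⟩).trans hrP0
  have hxQ₀ : xQ 0 = j := (hxQ ⟨0, ha⟩).trans hr'0
  have hjc0 : xQ 0 ≠ xP 0 := by rw [hxP₀, hxQ₀]; rintro rfl; exact hc0J hj
  have hjM : ∀ c, (xQ 0, c) ∉ M := fun c h => hjI (hxQ₀ ▸ mem_image_of_mem Prod.fst h)
  have hcols := forall_snd_ne_snd_of_unmatched hOPT hMsub hM hMcard hW hMp hP (hxP₀ ▸ hc0un)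
    (hyP ⟨kP - 1, _⟩ ▸ hPlast) hQ hjc0 (hxQ₀ ▸ hjOPT) hjM (hxQ ⟨0, ha⟩ ▸ hr'X _)
  have hrows := hP.ne_fst_of_forall_ne_snd (l := a) (hM.subset hMpM) (hxP₀ ▸ hc0un) hjc0
    (fun c h => hjM c (hMpM h))
    (fun t ht => by rw [hxQ ⟨t + 1, ht⟩, hyQ ⟨t, by omega⟩]; exact hQM ⟨t, by omega⟩ ht)
    (fun t ht => hcols t (by omega))
  exact ⟨fun t s => hxQ t ▸ hxP s ▸ hrows t t.2 s s.2,
    fun t s => hyQ t ▸ hyP s ▸ hcols t t.2 s s.2⟩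

/-- in the OPT setup, with `M_p = {(i,k) ∈ M : i ∈ X_{W*}}`, let `P` be an
augmenting path w.r.t. `M_p` from an `M_p`-unmatched row `c₀ ∈ X_{W*} \ (I ∪ J)` to an
`M_p`-unmatched column (encoded as in STATEMENT 10 by `rP, cP`).  Then for every `j ∈ J`,
no alternating path w.r.t. `M_p` starting from `j` (rows `r' : Fin a`, columns
`c' : Fin b`, with `a = b` if it ends at a column and `a = b + 1` if it ends at a row;
`r' t = i'_t`, `c' t = c'_{t+1}`) passes through any row or column vertex of `P`. -/
theorem stmt11 {m n : ℕ} (hn : 1 ≤ n) (hmn : n < m) (S : Finset (Fin m × Fin n))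
    (hspr : sprank S = n)
    (OPT : Finset (Fin m)) (hOPT : nu (patternOn S OPT) = n - 1)
    (hmax : ∀ T : Finset (Fin m), nu (patternOn S T) = n - 1 → T.card ≤ OPT.card)
    (M : Finset (Fin m × Fin n)) (hMsub : M ⊆ patternOn S OPT)
    (hM : IsMatching M) (hMcard : M.card = n - 1)
    (I : Finset (Fin m)) (hI : I = M.image Prod.fst)
    (J : Finset (Fin m)) (hJ : J = OPT \ I) (hJne : J.Nonempty)
    (W : Finset (Fin n)) (hW : W = M.image Prod.snd)
    (v : Fin n) (hv : v ∉ W)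
    (Mp : Finset (Fin m × Fin n)) (hMp : Mp = M.filter (fun p => p.1 ∈ rowsIn S W))
    (kP : ℕ) (hkP : 0 < kP) (rP : Fin kP → Fin m) (cP : Fin kP → Fin n)
    (c0 : Fin m) (hc0X : c0 ∈ rowsIn S W) (hc0I : c0 ∉ I) (hc0J : c0 ∉ J)
    (hc0un : ∀ k : Fin n, (c0, k) ∉ Mp)
    (hrP0 : rP ⟨0, hkP⟩ = c0)
    (hrPinj : Function.Injective rP) (hcPinj : Function.Injective cP)
    (hrPX : ∀ t, rP t ∈ rowsIn S W)
    (hPedge : ∀ t, (rP t, cP t) ∈ S)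
    (hPmatch : ∀ t : Fin kP, ∀ ht : t.val + 1 < kP, (rP ⟨t.val + 1, ht⟩, cP t) ∈ Mp)
    (hPlast : ∀ i : Fin m, (i, cP ⟨kP - 1, Nat.sub_lt hkP Nat.one_pos⟩) ∉ Mp) :
    ∀ j ∈ J, ∀ (a b : ℕ) (ha : 0 < a) (r' : Fin a → Fin m) (c' : Fin b → Fin n),
      (a = b ∨ a = b + 1) →
      r' ⟨0, ha⟩ = j →
      Function.Injective r' → Function.Injective c' →
      (∀ t, r' t ∈ rowsIn S W) →
      (∀ t : Fin b, ∀ ht : t.val < a, (r' ⟨t.val, ht⟩, c' t) ∈ S ∧ (r' ⟨t.val, ht⟩, c' t) ∉ Mp) →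
      (∀ t : Fin b, ∀ ht : t.val + 1 < a, (r' ⟨t.val + 1, ht⟩, c' t) ∈ Mp) →
      (∀ t s, r' t ≠ rP s) ∧ (∀ t s, c' t ≠ cP s) :=
  stmt11_general S OPT hOPT M hMsub hM hMcard I hI J hJ W hW Mp hMp kP hkP rP cP c0 hc0J hc0un hrP0
    hrPinj hcPinj hPedge hPmatch hPlast
end
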